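/- Let W satisfy (Self), let V satisfy (Cross), let ν be a nonnegative finite Borel measure on ℝ^d with ν(ℝ^d) ≤ M, let τ > 0, let ρ₀ ∈ P₂(ℝ^d), and let ρ₁ ∈ P₂(ℝ^d) be a minimizer over P₂(ℝ^d) of the penalised functional μ ↦ (1/(2τ)) d_{W₂}²(ρ₀,μ) + ℱ_ν(μ). Then d_{W₂}(ρ₀,ρ₁) ≤ 6 (M·Lip(V) + Lip(W)) τ, where Lip(W) and Lip(V) denote the Lipschitz constants of W and V. -/

import Mathlib

open MeasureTheory Filter
open scoped ENNReal NNReal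

noncomputable section

/-- Euclidean space `ℝ^d`. -/
abbrev Rd (d : ℕ) := EuclideanSpace ℝ (Fin d)

/-- The set of couplings of two measures: measures on the product space with the
prescribed marginals. -/
def couplings {d : ℕ} (μ ν : Measure (Rd d)) : Set (Measure (Rd d × Rd d)) :=
  {γ | γ.map Prod.fst = μ ∧ γ.map Prod.snd = ν}

/-- Optimal transport cost with squared-distance cost, in `ℝ≥0∞`. -/
def cost2 {d : ℕ} (μ ν : Measure (Rd d)) : ℝ≥0∞ :=
  ⨅ γ ∈ couplings μ ν, ∫⁻ z : Rd d × Rd d, ENNReal.ofReal (‖z.1 - z.2‖ ^ 2) ∂γ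

/-- The 2-Wasserstein distance, valued in `ℝ≥0∞`. -/
def W2 {d : ℕ} (μ ν : Measure (Rd d)) : ℝ≥0∞ := cost2 μ ν ^ (1 / 2 : ℝ)

/-- The squared 2-Wasserstein distance `d_{W₂}²(μ,ν)`, as a real number. -/
def W2sq {d : ℕ} (μ ν : Measure (Rd d)) : ℝ := (cost2 μ ν).toReal

/-- Membership in `P₂(ℝ^d)`: probability measure with finite second moment. -/
def MemP2 {d : ℕ} (μ : Measure (Rd d)) : Prop :=
  IsProbabilityMeasure μ ∧ ∫⁻ x, ENNReal.ofReal (‖x‖ ^ 2) ∂μ < ⊤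

/-- The energy functional `ℱ_ν(μ) = (1/2)∫∫W(x-y) dμ(y) dμ(x) + ∫∫V(x-y) dν(y) dμ(x)`. -/
def energy {d : ℕ} (W V : Rd d → ℝ) (ν μ : Measure (Rd d)) : ℝ :=
  (1 / 2) * ∫ x, (∫ y, W (x - y) ∂μ) ∂μ + ∫ x, (∫ y, V (x - y) ∂ν) ∂μ

/-- Assumption (Self) on the self-interaction potential `W`, with gradient `W'` away from
the origin, convexity parameter `lam ≤ 0` and Lipschitz constant `KW`. -/
structure IsSelfPotential {d : ℕ} (W : Rd d → ℝ) (W' : Rd d → Rd d) (lam : ℝ) (KW : ℝ≥0) :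
    Prop where
  cont : Continuous W
  grad : ∀ x : Rd d, x ≠ 0 → HasGradientAt W (W' x) x
  grad_cont : ContinuousOn W' {(0 : Rd d)}ᶜ
  even : ∀ x, W (-x) = W x
  lip : LipschitzWith KW W
  zero_at_zero : W 0 = 0
  growth : ∃ C > 0, ∀ x, W x ≤ C * (1 + ‖x‖ ^ 2)
  lam_nonpos : lam ≤ 0
  lam_convex : ConvexOn ℝ Set.univ fun x => W x - lam / 2 * ‖x‖ ^ 2

/-- Assumption (Cross) on the cross-interaction potential `V`, with gradient `V'` and
Lipschitz constant `KV`. -/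
structure IsCrossPotential {d : ℕ} (V : Rd d → ℝ) (V' : Rd d → Rd d) (KV : ℝ≥0) :
    Prop where
  contDiff : ContDiff ℝ 1 V
  grad : ∀ x, HasGradientAt V (V' x) x
  lip : LipschitzWith KV V
  bddBelow : ∃ V₀ : ℝ, ∀ x, V₀ ≤ V x

/-!
Testing the minimality of `ρ₁` against `ρ₀` gives `W₂²(ρ₀, ρ₁) ≤ 2τ (ℱ(ρ₀) - ℱ(ρ₁))`.
Both interaction terms are Lipschitz along any coupling `γ` of `ρ₀` and `ρ₁`, so
`ℱ(ρ₀) - ℱ(ρ₁) ≤ (Lip W + M Lip V) ∫ |x - y| dγ ≤ (Lip W + M Lip V) (∫ |x - y|² dγ)^(1/2)`.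
Taking the infimum over `γ` yields `W₂² ≤ 2τ (Lip W + M Lip V) W₂`, that is,
`W₂(ρ₀, ρ₁) ≤ 2 (M Lip V + Lip W) τ`.
-/

lemma LipschitzWith.comp_const_sub {E : Type*} [SeminormedAddCommGroup E] {K : ℝ≥0}
    {g : E → ℝ} (hg : LipschitzWith K g) (x : E) : LipschitzWith K fun y => g (x - y) :=
  LipschitzWith.of_dist_le_mul fun y y' => (hg.dist_le_mul _ _).trans_eq (by rw [dist_sub_left])

/-- Integrability of `y ↦ V (x - y)` does not depend on `x`; when it fails, the convolution is
identically `0`, which is Lipschitz as well. -/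
lemma LipschitzWith.integral_comp_sub {E : Type*} [NormedAddCommGroup E] [MeasurableSpace E]
    [OpensMeasurableSpace E] {K : ℝ≥0} {V : E → ℝ} (hV : LipschitzWith K V) (ν : Measure E)
    [IsFiniteMeasure ν] : LipschitzWith (K * (ν Set.univ).toNNReal) fun x => ∫ y, V (x - y) ∂ν := by
  refine LipschitzWith.of_dist_le_mul fun x x' => ?_
  have hbound : ∀ y, ‖V (x - y) - V (x' - y)‖ ≤ K * dist x x' := fun y => by
    rw [← dist_eq_norm, ← dist_sub_right x x' y]
    exact hV.dist_le_mul _ _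
  have hdiff : Integrable (fun y => V (x - y) - V (x' - y)) ν :=
    have := hV.continuous
    Integrable.of_bound (by fun_prop) _ (ae_of_all _ hbound)
  by_cases hx : Integrable (fun y => V (x - y)) ν
  · have hx' : Integrable (fun y => V (x' - y)) ν :=
      (hx.sub hdiff).congr (ae_of_all _ fun y => by simp)
    rw [dist_eq_norm, ← integral_sub hx hx']
    refine (norm_integral_le_of_norm_le_const (ae_of_all _ hbound)).trans_eq ?_
    simp only [measureReal_def, NNReal.coe_mul, ENNReal.coe_toNNReal_eq_toReal]
    ring
  · have hx' : ¬Integrable (fun y => V (x' - y)) ν := fun h =>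
      hx ((h.add hdiff).congr (ae_of_all _ fun y => by simp))
    rw [integral_undef hx, integral_undef hx', dist_self]
    positivity

section Wasserstein

variable {d : ℕ} {ρ₀ ρ₁ μ : Measure (Rd d)} {γ : Measure (Rd d × Rd d)}

lemma MemP2.memLp_two (h : MemP2 μ) : MemLp id 2 μ := by
  refine (memLp_two_iff_integrable_sq_norm aestronglyMeasurable_id).2 ⟨by fun_prop, ?_⟩
  rw [hasFiniteIntegral_iff_ofReal (ae_of_all _ fun x => by positivity)]
  exact h.2

lemma MemP2.integrable_norm (h : MemP2 μ) : Integrable (fun x => ‖x‖) μ :=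
  have := h.1
  (h.memLp_two.integrable one_le_two).norm

lemma LipschitzWith.integrable_of_memP2 {K : ℝ≥0} {g : Rd d → ℝ} (hg : LipschitzWith K g)
    (h : MemP2 μ) : Integrable g μ := by
  have := h.1
  refine Integrable.mono' ((integrable_const |g 0|).add (h.integrable_norm.const_mul K))
    hg.continuous.aestronglyMeasurable (ae_of_all _ fun x => ?_)
  have hx := hg.dist_le_mul x 0
  rw [Real.dist_eq, dist_zero_right] at hx
  show |g x| ≤ |g 0| + K * ‖x‖
  linarith [abs_sub_abs_le_abs_sub (g x) (g 0)]

lemma isProbabilityMeasure_of_mem_couplings (hγ : γ ∈ couplings ρ₀ ρ₁)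
    [IsProbabilityMeasure ρ₀] : IsProbabilityMeasure γ := by
  rwa [← Measure.isProbabilityMeasure_map_iff measurable_fst.aemeasurable, hγ.1]

lemma prod_mem_couplings [IsProbabilityMeasure ρ₀] [IsProbabilityMeasure ρ₁] :
    ρ₀.prod ρ₁ ∈ couplings ρ₀ ρ₁ :=
  ⟨by simp, by simp⟩

lemma map_diag_mem_couplings : μ.map (fun x => (x, x)) ∈ couplings μ μ := by
  have hm : Measurable (fun x : Rd d => (x, x)) := measurable_id.prodMk measurable_id
  constructor <;>
  · rw [Measure.map_map (by fun_prop) hm]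
    exact Measure.map_id

lemma memLp_sub_of_mem_couplings (hγ : γ ∈ couplings ρ₀ ρ₁) (h0 : MemP2 ρ₀) (h1 : MemP2 ρ₁) :
    MemLp (fun z : Rd d × Rd d => z.1 - z.2) 2 γ := by
  have hfst : MemLp (fun z : Rd d × Rd d => z.1) 2 γ :=
    (hγ.1 ▸ h0.memLp_two).comp_of_map measurable_fst.aemeasurable
  have hsnd : MemLp (fun z : Rd d × Rd d => z.2) 2 γ :=
    (hγ.2 ▸ h1.memLp_two).comp_of_map measurable_snd.aemeasurable
  exact hfst.sub hsnd

lemma integrable_norm_sub_of_mem_couplings (hγ : γ ∈ couplings ρ₀ ρ₁) (h0 : MemP2 ρ₀)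
    (h1 : MemP2 ρ₁) : Integrable (fun z : Rd d × Rd d => ‖z.1 - z.2‖) γ :=
  have := h0.1
  have := isProbabilityMeasure_of_mem_couplings hγ
  ((memLp_sub_of_mem_couplings hγ h0 h1).integrable one_le_two).norm

lemma integrable_sq_norm_sub_of_mem_couplings (hγ : γ ∈ couplings ρ₀ ρ₁) (h0 : MemP2 ρ₀)
    (h1 : MemP2 ρ₁) : Integrable (fun z : Rd d × Rd d => ‖z.1 - z.2‖ ^ 2) γ :=
  (memLp_two_iff_integrable_sq_norm (by fun_prop)).1 (memLp_sub_of_mem_couplings hγ h0 h1)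

lemma LipschitzWith.integral_sub_integral_le_of_mem_couplings {K : ℝ≥0} {g : Rd d → ℝ}
    (hg : LipschitzWith K g) (hγ : γ ∈ couplings ρ₀ ρ₁) (h0 : MemP2 ρ₀) (h1 : MemP2 ρ₁) :
    ∫ x, g x ∂ρ₀ - ∫ x, g x ∂ρ₁ ≤ K * ∫ z, ‖z.1 - z.2‖ ∂γ := by
  have hg0 : Integrable (fun z : Rd d × Rd d => g z.1) γ :=
    (hγ.1 ▸ hg.integrable_of_memP2 h0).comp_measurable measurable_fst
  have hg1 : Integrable (fun z : Rd d × Rd d => g z.2) γ :=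
    (hγ.2 ▸ hg.integrable_of_memP2 h1).comp_measurable measurable_snd
  rw [← hγ.1, ← hγ.2,
    integral_map measurable_fst.aemeasurable hg.continuous.aestronglyMeasurable,
    integral_map measurable_snd.aemeasurable hg.continuous.aestronglyMeasurable,
    ← integral_sub hg0 hg1, ← integral_const_mul]
  refine integral_mono (hg0.sub hg1)
    ((integrable_norm_sub_of_mem_couplings hγ h0 h1).const_mul _) fun z => ?_
  have := hg.dist_le_mul z.1 z.2
  rw [Real.dist_eq, dist_eq_norm] at this
  exact (le_abs_self _).trans this

lemma lintegral_sq_norm_sub_eq_ofReal (hγ : γ ∈ couplings ρ₀ ρ₁) (h0 : MemP2 ρ₀)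
    (h1 : MemP2 ρ₁) :
    ∫⁻ z, ENNReal.ofReal (‖z.1 - z.2‖ ^ 2) ∂γ = ENNReal.ofReal (∫ z, ‖z.1 - z.2‖ ^ 2 ∂γ) :=
  (ofReal_integral_eq_lintegral_ofReal (integrable_sq_norm_sub_of_mem_couplings hγ h0 h1)
    (ae_of_all _ fun _ => by positivity)).symm

lemma cost2_lt_top (h0 : MemP2 ρ₀) (h1 : MemP2 ρ₁) : cost2 ρ₀ ρ₁ < ⊤ := by
  have := h0.1
  have := h1.1
  calc cost2 ρ₀ ρ₁ ≤ ∫⁻ z, ENNReal.ofReal (‖z.1 - z.2‖ ^ 2) ∂(ρ₀.prod ρ₁) :=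
        biInf_le _ prod_mem_couplings
    _ < ⊤ := by
        rw [lintegral_sq_norm_sub_eq_ofReal prod_mem_couplings h0 h1]
        exact ENNReal.ofReal_lt_top

lemma W2sq_self (μ : Measure (Rd d)) : W2sq μ μ = 0 := by
  have hm : Measurable (fun x : Rd d => (x, x)) := measurable_id.prodMk measurable_id
  have : cost2 μ μ = 0 := by
    refine nonpos_iff_eq_zero.1 ((biInf_le _ map_diag_mem_couplings).trans_eq ?_)
    rw [lintegral_map (by fun_prop) hm]
    simp
  simp [W2sq, this]

lemma exists_mem_couplings_integral_lt (h0 : MemP2 ρ₀) (h1 : MemP2 ρ₁) {c : ℝ}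
    (hc : W2sq ρ₀ ρ₁ < c) : ∃ γ ∈ couplings ρ₀ ρ₁, ∫ z, ‖z.1 - z.2‖ ^ 2 ∂γ < c := by
  have hlt : cost2 ρ₀ ρ₁ < ENNReal.ofReal c :=
    (ENNReal.lt_ofReal_iff_toReal_lt (cost2_lt_top h0 h1).ne).2 hc
  simp only [cost2, iInf_lt_iff, exists_prop] at hlt
  obtain ⟨γ, hγ, hγc⟩ := hlt
  rw [lintegral_sq_norm_sub_eq_ofReal hγ h0 h1] at hγc
  exact ⟨γ, hγ, (ENNReal.ofReal_lt_ofReal_iff'.1 hγc).1⟩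

lemma le_mul_W2sq_of_forall_couplings (h0 : MemP2 ρ₀) (h1 : MemP2 ρ₁) {t A : ℝ} (hA : 0 ≤ A)
    (h : ∀ γ ∈ couplings ρ₀ ρ₁, t ≤ A * ∫ z, ‖z.1 - z.2‖ ^ 2 ∂γ) :
    t ≤ A * W2sq ρ₀ ρ₁ := by
  refine le_of_forall_pos_le_add fun ε hε => ?_
  obtain ⟨γ, hγ, hlt⟩ := exists_mem_couplings_integral_lt h0 h1
    (lt_add_of_pos_right (W2sq ρ₀ ρ₁) (div_pos hε (by positivity : 0 < A + 1)))
  calc t ≤ A * ∫ z, ‖z.1 - z.2‖ ^ 2 ∂γ := h γ hγ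
    _ ≤ A * (W2sq ρ₀ ρ₁ + ε / (A + 1)) := by gcongr
    _ ≤ A * W2sq ρ₀ ρ₁ + ε := by
        have : A * (ε / (A + 1)) ≤ ε := by
          rw [mul_div_assoc', div_le_iff₀ (by positivity)]
          nlinarith
        linarith [mul_add A (W2sq ρ₀ ρ₁) (ε / (A + 1))]

lemma sq_integral_norm_sub_le (hγ : γ ∈ couplings ρ₀ ρ₁) (h0 : MemP2 ρ₀) (h1 : MemP2 ρ₁) :
    (∫ z, ‖z.1 - z.2‖ ∂γ) ^ 2 ≤ ∫ z, ‖z.1 - z.2‖ ^ 2 ∂γ := by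
  have := h0.1
  have := isProbabilityMeasure_of_mem_couplings hγ
  have hvar := ProbabilityTheory.variance_nonneg (fun z : Rd d × Rd d => ‖z.1 - z.2‖) γ
  rw [ProbabilityTheory.variance_eq_sub (memLp_sub_of_mem_couplings hγ h0 h1).norm] at hvar
  simpa using hvar

/-- Since the `W₁` cost of a coupling is at most the square root of its `W₂` cost,
`W₂² ≤ B ⋅ W₁` forces `W₂² ≤ B ⋅ W₂`. -/
lemma W2sq_le_sq_of_forall_couplings (h0 : MemP2 ρ₀) (h1 : MemP2 ρ₁) {B : ℝ}
    (h : ∀ γ ∈ couplings ρ₀ ρ₁, W2sq ρ₀ ρ₁ ≤ B * ∫ z, ‖z.1 - z.2‖ ∂γ) :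
    W2sq ρ₀ ρ₁ ≤ B ^ 2 := by
  have hs : 0 ≤ W2sq ρ₀ ρ₁ := ENNReal.toReal_nonneg
  have hsq : W2sq ρ₀ ρ₁ ^ 2 ≤ B ^ 2 * W2sq ρ₀ ρ₁ := by
    refine le_mul_W2sq_of_forall_couplings h0 h1 (by positivity) fun γ hγ => ?_
    calc W2sq ρ₀ ρ₁ ^ 2 ≤ (B * ∫ z, ‖z.1 - z.2‖ ∂γ) ^ 2 := by gcongr; exact h γ hγ
      _ = B ^ 2 * (∫ z, ‖z.1 - z.2‖ ∂γ) ^ 2 := by ring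
      _ ≤ B ^ 2 * ∫ z, ‖z.1 - z.2‖ ^ 2 ∂γ := by gcongr; exact sq_integral_norm_sub_le hγ h0 h1
  nlinarith

lemma W2_le_ofReal_of_W2sq_le (h0 : MemP2 ρ₀) (h1 : MemP2 ρ₁) {b : ℝ} (hb : 0 ≤ b)
    (h : W2sq ρ₀ ρ₁ ≤ b ^ 2) : W2 ρ₀ ρ₁ ≤ ENNReal.ofReal b := by
  rw [W2, ← ENNReal.ofReal_toReal (cost2_lt_top h0 h1).ne]
  calc ENNReal.ofReal (cost2 ρ₀ ρ₁).toReal ^ (1 / 2 : ℝ)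
      ≤ ENNReal.ofReal (b ^ 2) ^ (1 / 2 : ℝ) := by gcongr; exact h
    _ = ENNReal.ofReal b := by
        rw [ENNReal.ofReal_rpow_of_nonneg (by positivity) (by norm_num), ← Real.sqrt_eq_rpow,
          Real.sqrt_sq hb]

lemma interaction_sub_interaction_le {K : ℝ≥0} {W : Rd d → ℝ} (hW : LipschitzWith K W)
    (hγ : γ ∈ couplings ρ₀ ρ₁) (h0 : MemP2 ρ₀) (h1 : MemP2 ρ₁) :
    ∫ x, ∫ y, W (x - y) ∂ρ₀ ∂ρ₀ - ∫ x, ∫ y, W (x - y) ∂ρ₁ ∂ρ₁ ≤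
      2 * K * ∫ z, ‖z.1 - z.2‖ ∂γ := by
  have := h0.1
  have := h1.1
  set m := ∫ z, ‖z.1 - z.2‖ ∂γ
  have hlip (μ : Measure (Rd d)) [IsProbabilityMeasure μ] :
      LipschitzWith K fun x => ∫ y, W (x - y) ∂μ := by
    simpa using hW.integral_comp_sub μ
  -- Move the outer variable along `γ`, then the inner one.
  have hout := (hlip ρ₀).integral_sub_integral_le_of_mem_couplings hγ h0 h1
  have hin : ∫ x, ∫ y, W (x - y) ∂ρ₀ ∂ρ₁ ≤ ∫ x, (∫ y, W (x - y) ∂ρ₁ + K * m) ∂ρ₁ :=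
    integral_mono ((hlip ρ₀).integrable_of_memP2 h1)
      (((hlip ρ₁).integrable_of_memP2 h1).add (integrable_const _)) fun x => by
        linarith [(hW.comp_const_sub x).integral_sub_integral_le_of_mem_couplings hγ h0 h1]
  rw [integral_add ((hlip ρ₁).integrable_of_memP2 h1) (integrable_const _), integral_const,
    probReal_univ, one_smul] at hin
  linarith

lemma energy_sub_energy_le {KW KV : ℝ≥0} {W V : Rd d → ℝ} (hW : LipschitzWith KW W)
    (hV : LipschitzWith KV V) (ν : Measure (Rd d)) [IsFiniteMeasure ν]
    (hγ : γ ∈ couplings ρ₀ ρ₁) (h0 : MemP2 ρ₀) (h1 : MemP2 ρ₁) :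
    energy W V ν ρ₀ - energy W V ν ρ₁ ≤
      (KW + (ν Set.univ).toReal * KV) * ∫ z, ‖z.1 - z.2‖ ∂γ := by
  have hself := interaction_sub_interaction_le hW hγ h0 h1
  have hcross := (hV.integral_comp_sub ν).integral_sub_integral_le_of_mem_couplings hγ h0 h1
  push_cast [ENNReal.coe_toNNReal_eq_toReal] at hcross
  rw [energy, energy]
  linarith

end Wasserstein

/-- One-step estimate for the JKO scheme: a minimizer `ρ₁` of the penalised functional
`μ ↦ (1/(2τ)) d_{W₂}²(ρ₀,μ) + ℱ_ν(μ)` over `P₂(ℝ^d)` satisfies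
`d_{W₂}(ρ₀,ρ₁) ≤ 6 (M·Lip(V) + Lip(W)) τ`. -/
theorem statement_10 {d : ℕ} (W : Rd d → ℝ) (W' : Rd d → Rd d) (lam : ℝ) (KW : ℝ≥0)
    (hW : IsSelfPotential W W' lam KW)
    (V : Rd d → ℝ) (V' : Rd d → Rd d) (KV : ℝ≥0) (hV : IsCrossPotential V V' KV)
    (M : ℝ) (ν : Measure (Rd d)) (hνfin : IsFiniteMeasure ν)
    (hνM : (ν Set.univ).toReal ≤ M)
    (τ : ℝ) (hτ : 0 < τ) (ρ₀ ρ₁ : Measure (Rd d)) (hρ₀ : MemP2 ρ₀) (hρ₁ : MemP2 ρ₁)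
    (hmin : ∀ μ : Measure (Rd d), MemP2 μ →
      1 / (2 * τ) * W2sq ρ₀ ρ₁ + energy W V ν ρ₁ ≤
        1 / (2 * τ) * W2sq ρ₀ μ + energy W V ν μ) :
    W2 ρ₀ ρ₁ ≤ ENNReal.ofReal (6 * (M * KV + KW) * τ) := by
  set C : ℝ := M * KV + KW
  have hM : 0 ≤ M := ENNReal.toReal_nonneg.trans hνM
  have hgap : W2sq ρ₀ ρ₁ ≤ 2 * τ * (energy W V ν ρ₀ - energy W V ν ρ₁) := by
    have h := hmin ρ₀ hρ₀
    rw [W2sq_self, mul_zero, zero_add, ← le_sub_iff_add_le, one_div] at h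
    exact (inv_mul_le_iff₀ (by positivity)).1 h
  have hW2sq : W2sq ρ₀ ρ₁ ≤ (2 * τ * C) ^ 2 := by
    refine W2sq_le_sq_of_forall_couplings hρ₀ hρ₁ fun γ hγ => hgap.trans ?_
    calc 2 * τ * (energy W V ν ρ₀ - energy W V ν ρ₁)
        ≤ 2 * τ * ((KW + (ν Set.univ).toReal * KV) * ∫ z, ‖z.1 - z.2‖ ∂γ) := by
          gcongr
          exact energy_sub_energy_le hW.lip hV.lip ν hγ hρ₀ hρ₁
      _ ≤ 2 * τ * ((KW + M * KV) * ∫ z, ‖z.1 - z.2‖ ∂γ) := by gcongr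
      _ = 2 * τ * C * ∫ z, ‖z.1 - z.2‖ ∂γ := by ring
  calc W2 ρ₀ ρ₁ ≤ ENNReal.ofReal (2 * τ * C) :=
        W2_le_ofReal_of_W2sq_le hρ₀ hρ₁ (by positivity) hW2sq
    _ ≤ ENNReal.ofReal (6 * (M * KV + KW) * τ) :=
        ENNReal.ofReal_le_ofReal (by nlinarith [show 0 ≤ τ * C by positivity])
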